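/- Let R be a commutative ring, M a w-module over R, and M_1, …, M_n pairwise non-isomorphic w-simple R-submodules of M. Then the sum Σ_{i=1}^n M_i is direct, i.e., Σ_{i=1}^n M_i = ⊕_{i=1}^n M_i (the family {M_i} is independent). -/

import Mathlib

universe u v

section WDefs

variable (R : Type u) [CommRing R]

/-- The canonical `R`-linear map `R → Hom_R(J, R)`, `r ↦ (j ↦ r * j)`. -/
def gvCanonicalMap (J : Ideal R) : R →ₗ[R] (J →ₗ[R] R) where
  toFun r := r • (J.subtype)
  map_add' x y := add_smul x y _
  map_smul' r x := by simp [mul_smul]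

/-- A finitely generated ideal `J` of `R` is a GV-ideal (Glaz–Vasconcelos ideal)
if the canonical map `R → Hom_R(J, R)` is an isomorphism. -/
def IsGVIdeal (J : Ideal R) : Prop :=
  J.FG ∧ Function.Bijective (gvCanonicalMap R J)

/-- An ideal `I` of `R` is a w-ideal if whenever `J x ⊆ I` for some GV-ideal `J`,
then `x ∈ I`. -/
def IsWIdeal (I : Ideal R) : Prop :=
  ∀ x : R, (∃ J : Ideal R, IsGVIdeal R J ∧ ∀ j ∈ J, j * x ∈ I) → x ∈ I

/-- `m` is a maximal w-ideal: maximal among the proper w-ideals of `R`. -/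
def IsMaxWIdeal (m : Ideal R) : Prop :=
  IsWIdeal R m ∧ m ≠ ⊤ ∧ ∀ I : Ideal R, IsWIdeal R I → I ≠ ⊤ → m ≤ I → I = m

variable {M : Type v} [AddCommGroup M] [Module R M]

/-- `x` is a GV-torsion element if it is killed by some GV-ideal. -/
def IsGVTorsionElem (x : M) : Prop :=
  ∃ J : Ideal R, IsGVIdeal R J ∧ ∀ j ∈ J, j • x = 0

variable (M)

/-- `M` is GV-torsion-free if it has no nonzero GV-torsion element. -/
def IsGVTorsionFree : Prop := ∀ x : M, IsGVTorsionElem R x → x = 0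

/-- `M` is GV-torsion if all its elements are GV-torsion. -/
def IsGVTorsion : Prop := ∀ x : M, IsGVTorsionElem R x

/-- `M` is a w-module: GV-torsion-free and every map from a GV-ideal to `M`
extends to `R`. -/
def IsWModule : Prop :=
  IsGVTorsionFree R M ∧
    ∀ J : Ideal R, IsGVIdeal R J → ∀ f : J →ₗ[R] M,
      ∃ g : R →ₗ[R] M, ∀ x : J, g (x : R) = f x

end WDefs

/-- `K` is a w-submodule of `M`: whenever `J x ⊆ K` for some GV-ideal `J` (with `x ∈ M`),
then `x ∈ K`. -/
def IsWSubmodule (R : Type u) [CommRing R] {M : Type v} [AddCommGroup M] [Module R M]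
    (K : Submodule R M) : Prop :=
  ∀ x : M, (∃ J : Ideal R, IsGVIdeal R J ∧ ∀ j ∈ J, j • x ∈ K) → x ∈ K

/-- `T` is a w-simple submodule of `M`: `T` is a nonzero w-submodule whose only
w-submodules (submodules of `T` closed under the relative w-operation) are `0` and `T`. -/
def IsWSimpleSubmodule (R : Type u) [CommRing R] {M : Type v} [AddCommGroup M] [Module R M]
    (T : Submodule R M) : Prop :=
  IsWSubmodule R T ∧ T ≠ ⊥ ∧
    ∀ K : Submodule R M, K ≤ T →
      (∀ x ∈ T, (∃ J : Ideal R, IsGVIdeal R J ∧ ∀ j ∈ J, j • x ∈ K) → x ∈ K) →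
        K = ⊥ ∨ K = T


/-!
By induction on the number of summands it suffices to show that `T ∩ (T' ⊕ B) = 0` when `T`, `T'`
are non-isomorphic w-simple submodules both meeting `B` trivially. Projecting `K = T ∩ (T' ⊕ B)`
onto `T'` along `B` gives a map `K → T'`; if it vanishes then `K ⊆ T ∩ B = 0`. Otherwise `K ≠ 0`,
so `K` is w-dense in the w-simple `T`, and since `T'` is a w-module the map extends to a nonzero
map `T → T'`. Its kernel and its image are w-submodules, so by w-simplicity it is an isomorphism.
-/

open scoped TensorProduct

section GVIdeal

variable {R : Type u} [CommRing R] {I J : Ideal R}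

@[simp]
theorem gvCanonicalMap_apply (r : R) (x : J) : gvCanonicalMap R J r x = r * x := rfl

theorem gvCanonicalMap_injective_iff :
    Function.Injective (gvCanonicalMap R J) ↔ ∀ r : R, (∀ x ∈ J, r * x = 0) → r = 0 := by
  rw [injective_iff_map_eq_zero]
  simp [LinearMap.ext_iff]

namespace IsGVIdeal

theorem eq_zero_of_forall_mul_eq_zero (hJ : IsGVIdeal R J) {r : R} (h : ∀ x ∈ J, r * x = 0) :
    r = 0 :=
  gvCanonicalMap_injective_iff.mp hJ.2.1 r h

theorem top : IsGVIdeal R (⊤ : Ideal R) := by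
  refine ⟨⟨{1}, by simp⟩, gvCanonicalMap_injective_iff.mpr fun r hr => by simpa using hr 1, ?_⟩
  intro f
  refine ⟨f ⟨1, Submodule.mem_top⟩, LinearMap.ext fun x => ?_⟩
  rw [gvCanonicalMap_apply, mul_comm, ← smul_eq_mul, ← f.map_smul]
  congr 1
  ext
  simp

theorem mul (hI : IsGVIdeal R I) (hJ : IsGVIdeal R J) : IsGVIdeal R (I * J) := by
  refine ⟨hI.1.mul hJ.1, gvCanonicalMap_injective_iff.mpr fun r hr => ?_, fun f => ?_⟩
  · refine hI.eq_zero_of_forall_mul_eq_zero fun a ha =>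
      hJ.eq_zero_of_forall_mul_eq_zero fun b hb => ?_
    rw [mul_assoc]
    exact hr _ (Ideal.mul_mem_mul ha hb)
  · -- `a ↦ (b ↦ f (a * b))` is a linear map `I → Hom(J, R) ≅ R`, hence multiplication by some `r`.
    let eI := LinearEquiv.ofBijective _ hI.2
    let eJ := LinearEquiv.ofBijective _ hJ.2
    let φ : I →ₗ[R] R :=
      eJ.symm.toLinearMap ∘ₗ TensorProduct.curry (f ∘ₗ Submodule.mulMap' I J)
    refine ⟨eI.symm φ, (LinearMap.cancel_right (Submodule.mulMap'_surjective I J)).mp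
      (TensorProduct.ext' fun a b => ?_)⟩
    have ha : eI.symm φ * a = φ a := congrArg (· a) (eI.apply_symm_apply φ)
    have hb : φ a * b = f (Submodule.mulMap' I J (a ⊗ₜ b)) :=
      congrArg (· b) (eJ.apply_symm_apply _)
    simp only [LinearMap.comp_apply, gvCanonicalMap_apply]
    rw [← hb, ← ha, mul_assoc]
    rfl

end IsGVIdeal

end GVIdeal

section WModule

variable {R : Type u} [CommRing R] {M : Type v} [AddCommGroup M] [Module R M]
  {N : Type*} [AddCommGroup N] [Module R N]

theorem IsGVTorsionFree.eq_of_forall_smul_eq (hM : IsGVTorsionFree R M) {J : Ideal R}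
    (hJ : IsGVIdeal R J) {x y : M} (h : ∀ j ∈ J, j • x = j • y) : x = y :=
  sub_eq_zero.mp <| hM _ ⟨J, hJ, fun j hj => by rw [smul_sub, h j hj, sub_self]⟩

theorem IsWModule.exists_forall_smul_eq (hM : IsWModule R M) {J : Ideal R} (hJ : IsGVIdeal R J)
    (f : J →ₗ[R] M) : ∃ y : M, ∀ j : J, (j : R) • y = f j := by
  obtain ⟨g, hg⟩ := hM.2 J hJ f
  exact ⟨g 1, fun j => by rw [← hg j, ← g.map_smul, smul_eq_mul, mul_one]⟩

theorem IsWSubmodule.comap {P : Submodule R N} (hP : IsWSubmodule R P) (g : M →ₗ[R] N) :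
    IsWSubmodule R (P.comap g) := by
  rintro x ⟨J, hJ, hx⟩
  exact hP _ ⟨J, hJ, fun j hj => by simpa using hx j hj⟩

theorem IsWSubmodule.isWModule (hM : IsWModule R M) {P : Submodule R M}
    (hP : IsWSubmodule R P) : IsWModule R P := by
  refine ⟨fun x ⟨J, hJ, hx⟩ => ?_, fun J hJ f => ?_⟩
  · exact Subtype.ext <| hM.1 _ ⟨J, hJ, fun j hj => by simpa using congrArg Subtype.val (hx j hj)⟩
  obtain ⟨y, hy⟩ := hM.exists_forall_smul_eq hJ (P.subtype ∘ₗ f)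
  have hyP : y ∈ P := hP y ⟨J, hJ, fun j hj => by simp [hy ⟨j, hj⟩]⟩
  exact ⟨LinearMap.toSpanSingleton R P ⟨y, hyP⟩, fun j => Subtype.ext (by simpa using hy j)⟩

theorem isWSubmodule_ker (hN : IsGVTorsionFree R N) (g : M →ₗ[R] N) :
    IsWSubmodule R (LinearMap.ker g) := by
  rintro x ⟨J, hJ, hx⟩
  exact hN _ ⟨J, hJ, fun j hj => by simpa using hx j hj⟩

theorem isWSubmodule_range_of_injective (hM : IsWModule R M) (hN : IsGVTorsionFree R N)
    {g : M →ₗ[R] N} (hg : Function.Injective g) : IsWSubmodule R (LinearMap.range g) := by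
  rintro y ⟨J, hJ, hy⟩
  let e := LinearEquiv.ofInjective g hg
  let mul_y : J →ₗ[R] LinearMap.range g :=
    (LinearMap.toSpanSingleton R N y).restrict fun j hj => hy j hj
  obtain ⟨x, hx⟩ := hM.exists_forall_smul_eq hJ (e.symm.toLinearMap ∘ₗ mul_y)
  refine ⟨x, hN.eq_of_forall_smul_eq hJ fun j hj => ?_⟩
  calc j • g x = g (e.symm (mul_y ⟨j, hj⟩)) := by rw [← map_smul, hx ⟨j, hj⟩]; rfl
    _ = j • y := congrArg Subtype.val (e.apply_symm_apply _)

end WModule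

section WClosure

variable {R : Type u} [CommRing R] {M : Type v} [AddCommGroup M] [Module R M]

def wClosure (P : Submodule R M) : Submodule R M where
  carrier := {x | ∃ J : Ideal R, IsGVIdeal R J ∧ ∀ j ∈ J, j • x ∈ P}
  zero_mem' := ⟨⊤, IsGVIdeal.top, fun j _ => by simp⟩
  add_mem' := by
    rintro x y ⟨J, hJ, hx⟩ ⟨J', hJ', hy⟩
    refine ⟨J * J', hJ.mul hJ', fun j hj => ?_⟩
    rw [smul_add]
    exact P.add_mem (hx j (Ideal.mul_le_left hj)) (hy j (Ideal.mul_le_right hj))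
  smul_mem' := by
    rintro r x ⟨J, hJ, hx⟩
    exact ⟨J, hJ, fun j hj => by rw [smul_comm]; exact P.smul_mem r (hx j hj)⟩

variable {P : Submodule R M}

theorem le_wClosure : P ≤ wClosure P :=
  fun _ hx => ⟨⊤, IsGVIdeal.top, fun j _ => P.smul_mem j hx⟩

theorem exists_isGVIdeal_forall_smul_mem (s : Finset M) (hs : ↑s ⊆ (wClosure P : Set M)) :
    ∃ J : Ideal R, IsGVIdeal R J ∧ ∀ j ∈ J, ∀ x ∈ s, j • x ∈ P := by
  classical
  induction s using Finset.induction with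
  | empty => exact ⟨⊤, IsGVIdeal.top, by simp⟩
  | insert x s _ ih =>
    rw [Finset.coe_insert, Set.insert_subset_iff] at hs
    obtain ⟨J, hJ, hJs⟩ := ih hs.2
    obtain ⟨Jx, hJx, hJxx⟩ := hs.1
    refine ⟨Jx * J, hJx.mul hJ, fun j hj y hy => ?_⟩
    rcases Finset.mem_insert.mp hy with rfl | hy
    · exact hJxx j (Ideal.mul_le_left hj)
    · exact hJs j (Ideal.mul_le_right hj) y hy

theorem isWSubmodule_wClosure : IsWSubmodule R (wClosure P) := by
  classical
  rintro x ⟨J, hJ, hx⟩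
  obtain ⟨s, rfl⟩ := hJ.1
  obtain ⟨C, hC, hCs⟩ := exists_isGVIdeal_forall_smul_mem (s.image (· • x)) <| by
    simpa [Set.subset_def] using fun a ha => hx a (Submodule.subset_span ha)
  -- `C` moves every generator of `J` into `P`, so `J * C` moves `x` into `P`.
  have hJ_colon : Submodule.span R ↑s ≤ (P.comap (LinearMap.toSpanSingleton R M x)).colon C := by
    refine Submodule.span_le.mpr fun a ha => Submodule.mem_colon.mpr fun c hc => ?_
    simpa [mul_smul, smul_comm c a] using hCs c hc (a • x) (Finset.mem_image_of_mem _ ha)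
  refine ⟨_, hJ.mul hC, fun j hj => ?_⟩
  simpa using
    Submodule.mul_le.mpr (fun a ha c hc => Submodule.mem_colon.mp (hJ_colon ha) c hc) hj

end WClosure

section Extension

variable {R : Type u} [CommRing R] {M : Type v} [AddCommGroup M] [Module R M]
  {N : Type*} [AddCommGroup N] [Module R N]

/-- The extension is read off the w-closure of the graph of `f` in `M × N`. -/
theorem LinearPMap.exists_le_wClosure_domain (hN : IsWModule R N) (f : M →ₗ.[R] N) :
    ∃ g : M →ₗ.[R] N, f ≤ g ∧ wClosure f.domain ≤ g.domain := by
  have hgraph : ∀ x ∈ wClosure f.graph, x.1 = 0 → x.2 = 0 := by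
    rintro ⟨_, y⟩ ⟨J, hJ, hy⟩ rfl
    refine hN.1 y ⟨J, hJ, fun j hj => ?_⟩
    obtain ⟨z, hz, hzy⟩ := f.mem_graph_iff.mp (hy j hj)
    have hz0 : z = 0 := Subtype.ext (by simpa using hz)
    rw [hz0, map_zero] at hzy
    exact hzy.symm
  refine ⟨(wClosure f.graph).toLinearPMap, ?_, fun x ⟨J, hJ, hx⟩ => ?_⟩
  · rw [← LinearPMap.le_graph_iff, Submodule.toLinearPMap_graph_eq _ hgraph]
    exact le_wClosure
  · let fx : J →ₗ[R] N := f.toFun ∘ₗ (LinearMap.toSpanSingleton R M x).restrict hx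
    obtain ⟨y, hy⟩ := hN.exists_forall_smul_eq hJ fx
    refine ⟨(x, y), ⟨J, hJ, fun j hj => ?_⟩, rfl⟩
    exact f.mem_graph_iff.mpr ⟨⟨j • x, hx j hj⟩, rfl, (hy ⟨j, hj⟩).symm⟩

end Extension

section WSimple

variable {R : Type u} [CommRing R] {M : Type v} [AddCommGroup M] [Module R M]
  {T T' : Submodule R M}

namespace IsWSimpleSubmodule

theorem eq_bot_or_eq_top (hT : IsWSimpleSubmodule R T) {L : Submodule R T}
    (hL : IsWSubmodule R L) : L = ⊥ ∨ L = ⊤ := by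
  have hcl : ∀ x ∈ T, (∃ J : Ideal R, IsGVIdeal R J ∧ ∀ j ∈ J, j • x ∈ L.map T.subtype) →
      x ∈ L.map T.subtype := by
    rintro x hx ⟨J, hJ, hJx⟩
    refine ⟨⟨x, hx⟩, hL _ ⟨J, hJ, fun j hj => ?_⟩, rfl⟩
    obtain ⟨z, hz, hzx⟩ := hJx j hj
    rwa [show z = j • ⟨x, hx⟩ from Subtype.ext hzx] at hz
  have hinj := Submodule.map_injective_of_injective T.injective_subtype
  refine (hT.2.2 _ (Submodule.map_subtype_le T L) hcl).imp (fun h => hinj ?_) (fun h => hinj ?_)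
  · rwa [Submodule.map_bot]
  · rwa [Submodule.map_subtype_top]

theorem bijective_of_ne_zero (hM : IsWModule R M) (hT : IsWSimpleSubmodule R T)
    (hT' : IsWSimpleSubmodule R T') {g : T →ₗ[R] T'} (hg : g ≠ 0) : Function.Bijective g := by
  have htf' : IsGVTorsionFree R T' := (hT'.1.isWModule hM).1
  have hinj : Function.Injective g := by
    rcases hT.eq_bot_or_eq_top (isWSubmodule_ker htf' g) with h | h
    · exact LinearMap.ker_eq_bot.mp h
    · exact absurd (LinearMap.ker_eq_top.mp h) hg
  refine ⟨hinj, ?_⟩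
  rcases hT'.eq_bot_or_eq_top (isWSubmodule_range_of_injective (hT.1.isWModule hM) htf' hinj)
    with h | h
  · exact absurd (LinearMap.range_eq_bot.mp h) hg
  · exact LinearMap.range_eq_top.mp h

theorem nonempty_linearEquiv_of_ne_zero (hM : IsWModule R M) (hT : IsWSimpleSubmodule R T)
    (hT' : IsWSimpleSubmodule R T') {K : Submodule R M} (hKT : K ≤ T) {f : K →ₗ[R] T'}
    (hf : f ≠ 0) : Nonempty (T ≃ₗ[R] T') := by
  obtain ⟨k, hk⟩ : ∃ k, f k ≠ 0 := by
    by_contra! h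
    exact hf (LinearMap.ext h)
  have hTK : T ≤ wClosure K := by
    rcases hT.eq_bot_or_eq_top (isWSubmodule_wClosure.comap T.subtype) with h | h
    · have hk0 : (⟨k, hKT k.2⟩ : T) ∈ (wClosure K).comap T.subtype := le_wClosure k.2
      rw [h, Submodule.mem_bot, Submodule.mk_eq_zero, ZeroMemClass.coe_eq_zero] at hk0
      exact absurd (by rw [hk0, map_zero]) hk
    · exact Submodule.comap_subtype_eq_top.mp h
  obtain ⟨g, hfg, hdom⟩ := LinearPMap.exists_le_wClosure_domain (hT'.1.isWModule hM) ⟨K, f⟩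
  let G : T →ₗ[R] T' := g.toFun ∘ₗ Submodule.inclusion (hTK.trans hdom)
  have hG : G ≠ 0 := fun h0 =>
    hk <| (hfg.2 (x := k) (y := ⟨k, hTK.trans hdom (hKT k.2)⟩) rfl).trans
      (LinearMap.congr_fun h0 ⟨k, hKT k.2⟩)
  exact ⟨LinearEquiv.ofBijective G (hT.bijective_of_ne_zero hM hT' hG)⟩

end IsWSimpleSubmodule

end WSimple

section Independence

variable {R : Type u} [CommRing R] {M : Type v} [AddCommGroup M] [Module R M]

theorem Submodule.exists_linearMap_sub_mem_of_disjoint {A B : Submodule R M}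
    (h : Disjoint A B) : ∃ p : ↥(A ⊔ B) →ₗ[R] A, ∀ x : ↥(A ⊔ B), (x : M) - p x ∈ B := by
  let φ := A.subtype.coprod B.subtype
  have hφ : Function.Injective φ := by
    rw [← LinearMap.ker_eq_bot, LinearMap.ker_coprod_of_disjoint_range] <;> simp [h]
  have hle : A ⊔ B ≤ LinearMap.range φ := by simp [φ, LinearMap.range_coprod]
  let e := LinearEquiv.ofInjective φ hφ
  refine ⟨LinearMap.fst R A B ∘ₗ e.symm.toLinearMap ∘ₗ Submodule.inclusion hle, fun x => ?_⟩
  have hx : ((e.symm (Submodule.inclusion hle x)).1 : M) + (e.symm (Submodule.inclusion hle x)).2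
      = x := congrArg Subtype.val (e.apply_symm_apply _)
  simp [← hx]

theorem IsWSimpleSubmodule.disjoint_sup (hM : IsWModule R M) {T T' B : Submodule R M}
    (hT : IsWSimpleSubmodule R T) (hT' : IsWSimpleSubmodule R T')
    (hTT' : IsEmpty (T ≃ₗ[R] T')) (hTB : Disjoint T B) (hT'B : Disjoint T' B) :
    Disjoint T (T' ⊔ B) := by
  obtain ⟨p, hp⟩ := Submodule.exists_linearMap_sub_mem_of_disjoint hT'B
  have hp0 : p ∘ₗ Submodule.inclusion inf_le_right = (0 : ↥(T ⊓ (T' ⊔ B)) →ₗ[R] T') := by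
    by_contra hne
    exact hTT'.false (hT.nonempty_linearEquiv_of_ne_zero hM hT' inf_le_left hne).some
  refine Submodule.disjoint_def.mpr fun x hxT hx => Submodule.disjoint_def.mp hTB x hxT ?_
  have hpx : p ⟨x, hx⟩ = 0 := LinearMap.congr_fun hp0 ⟨x, hxT, hx⟩
  simpa [hpx] using hp ⟨x, hx⟩

theorem disjoint_finset_sup_of_isWSimpleSubmodule (hM : IsWModule R M) {ι : Type*}
    {T : ι → Submodule R M} (hsimple : ∀ i, IsWSimpleSubmodule R (T i))
    (hnoniso : ∀ i j, i ≠ j → IsEmpty (T i ≃ₗ[R] T j)) (s : Finset ι) {i : ι} (hi : i ∉ s) :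
    Disjoint (T i) (s.sup T) := by
  classical
  induction s using Finset.induction generalizing i with
  | empty => simp
  | insert j s hjs ih =>
    rw [Finset.mem_insert, not_or] at hi
    rw [Finset.sup_insert]
    exact (hsimple i).disjoint_sup hM (hsimple j) (hnoniso i j hi.1) (ih hi.2) (ih hjs)

end Independence

/-- Pairwise non-isomorphic w-simple submodules `M_1, …, M_n` of a
w-module `M` form an independent family: their sum is direct. -/
theorem wSimple_pairwise_nonIso_independent (R : Type u) [CommRing R] (M : Type u)
    [AddCommGroup M] [Module R M] (hM : IsWModule R M) (n : ℕ)
    (T : Fin n → Submodule R M) (hsimple : ∀ i, IsWSimpleSubmodule R (T i))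
    (hnoniso : ∀ i j, i ≠ j → IsEmpty (T i ≃ₗ[R] T j)) :
    iSupIndep T := by
  rw [iSupIndep_iff_supIndep_univ, Finset.supIndep_iff_disjoint_erase]
  exact fun i _ => disjoint_finset_sup_of_isWSimpleSubmodule hM hsimple hnoniso _
    (Finset.notMem_erase i _)
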